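/- arXiv:1906.04188 — 5 statements merged into one kernel-verified Lean document; each statement's English description precedes it below -/
import Mathlib

section
/- For every k ≥ 0, the homogeneous cochain ω_k : (Z/2)^{k+2} → R/Z defined by ω_k(x_0,...,x_{k+1}) = 1/2 if (x_0,...,x_{k+1}) is one of the two alternating sequences (1,0,1,0,...) or (0,1,0,1,...), and 0 otherwise, is a group cocycle: its group-cohomology coboundary (δω_k)(x_0,...,x_{k+2}) = Σ_{j=0}^{k+2} (−1)^j ω_k(x_0,...,x̂_j,...,x_{k+2}) vanishes identically in R/Z. -/
/-- The two alternating bit sequences. -/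
def altA (n : ℕ) : Fin n → ZMod 2 := fun j => if j.val % 2 = 0 then 1 else 0
def altB (n : ℕ) : Fin n → ZMod 2 := fun j => if j.val % 2 = 0 then 0 else 1

/-- The homogeneous cochain `ω_k : (ℤ/2)^{k+2} → ℝ/ℤ`, equal to `1/2` on the two
alternating sequences and `0` otherwise. -/
noncomputable def omegaGDS (k : ℕ) (x : Fin (k + 2) → ZMod 2) : AddCircle (1 : ℝ) :=
  if x = altA (k + 2) ∨ x = altB (k + 2) then ((1 / 2 : ℝ) : AddCircle (1 : ℝ)) else 0

/-! ### Auxiliary lemmas -/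

lemma zmod2_step : ∀ a b : ZMod 2, a ≠ b → b = a + 1 := by decide
lemma zmod2_trans : ∀ a b c : ZMod 2, a ≠ b → b ≠ c → a = c := by decide
lemma zmod2_cases : ∀ a : ZMod 2, a = 0 ∨ a = 1 := by decide

lemma natCast_zmod2 (a : ℕ) : ((a : ZMod 2)) = if a % 2 = 0 then 0 else 1 := by
  rw [← ZMod.natCast_mod a 2]
  rcases Nat.mod_two_eq_zero_or_one a with h | h <;> rw [h] <;> rfl

lemma half_add_half : ((1/2 : ℝ) : AddCircle (1:ℝ)) + ((1/2:ℝ) : AddCircle (1:ℝ)) = 0 := by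
  rw [← AddCircle.coe_add]; norm_num

lemma half_ne_zero : ((1/2 : ℝ) : AddCircle (1:ℝ)) ≠ 0 := by
  intro h
  rw [AddCircle.coe_eq_zero_iff] at h
  obtain ⟨n, hn⟩ := h
  rw [zsmul_eq_mul, mul_one] at hn
  have h2 : ((2*n : ℤ) : ℝ) = 1 := by push_cast; linarith
  have : (2*n : ℤ) = 1 := by exact_mod_cast h2
  omega

/-- A tuple equals one of the two alternating sequences iff successive entries differ. -/
lemma alt_iff (m : ℕ) (y : Fin (m+2) → ZMod 2) :
    (y = altA (m+2) ∨ y = altB (m+2)) ↔ ∀ i : Fin (m+1), y i.castSucc ≠ y i.succ := by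
  constructor
  · rintro (rfl | rfl) i <;>
    · simp only [altA, altB, Fin.coe_castSucc, Fin.val_succ]
      rcases Nat.mod_two_eq_zero_or_one i.val with h | h <;>
        simp [h, Nat.add_mod, Nat.one_mod]
  · intro hy
    have key : ∀ a : ℕ, ∀ h : a < m+2, y ⟨a, h⟩ = y ⟨0, by omega⟩ + (a : ZMod 2) := by
      intro a
      induction a with
      | zero => intro h; simp
      | succ a ih =>
        intro h
        have ha : a < m + 1 := by omega
        have h1 := hy ⟨a, ha⟩
        have h2 : y ⟨a+1, h⟩ = y ⟨a, by omega⟩ + 1 := by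
          have := zmod2_step _ _ h1
          simpa [Fin.castSucc, Fin.succ, Fin.castAdd, Fin.castLE] using this
        rw [h2, ih (by omega)]
        push_cast
        ring
    rcases zmod2_cases (y ⟨0, by omega⟩) with h0 | h0
    · right
      funext j
      have := key j.val j.isLt
      rw [Fin.eta] at this
      rw [this, h0, natCast_zmod2, altB]
      rcases Nat.mod_two_eq_zero_or_one j.val with h | h <;> simp [h]
    · left
      funext j
      have := key j.val j.isLt
      rw [Fin.eta] at this
      rw [this, h0, natCast_zmod2, altA]
      rcases Nat.mod_two_eq_zero_or_one j.val with h | h <;> simp [h] <;> decide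

/-- The three alternating conditions for the sequence `X` with `j`-th entry removed,
where `X` has `n` relevant entries (indices `0..n-1`). -/
def Cn (X : ℕ → ZMod 2) (n j : ℕ) : Prop :=
  (∀ a, a + 1 < j → X a ≠ X (a+1)) ∧
  (∀ a, j < a → a + 1 < n → X a ≠ X (a+1)) ∧
  (0 < j → j + 1 < n → X (j-1) ≠ X (j+1))

/-- The pairing involution on indices whose removal leaves an alternating sequence. -/
def sig (X : ℕ → ZMod 2) (n j : ℕ) : ℕ :=
  if j + 1 < n ∧ X j = X (j+1) then j + 1
  else if 0 < j ∧ X (j-1) = X j then j - 1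
  else if j = 0 then n - 1 else 0

lemma sig_lt (X : ℕ → ZMod 2) {n j : ℕ} (hn : 2 ≤ n) (hj : j < n) : sig X n j < n := by
  unfold sig; split_ifs <;> omega

lemma sig_ne (X : ℕ → ZMod 2) {n j : ℕ} (hn : 2 ≤ n) (hj : j < n) : sig X n j ≠ j := by
  unfold sig; split_ifs <;> omega

/-- In case D (no adjacent defect, `j ≠ 0`), `j` must be `n-1` and `X` is alternating. -/
lemma caseD_alt {X : ℕ → ZMod 2} {n j : ℕ} (hn : 2 ≤ n) (hj : j < n) (hC : Cn X n j)
    (hA : ¬(j + 1 < n ∧ X j = X (j+1))) (hB : ¬(0 < j ∧ X (j-1) = X j)) (hj0 : j ≠ 0) :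
    j = n - 1 ∧ ∀ a, a + 1 < n → X a ≠ X (a+1) := by
  obtain ⟨h1, h2, h3⟩ := hC
  have hBj : X (j-1) ≠ X j := fun h => hB ⟨by omega, h⟩
  have hlast : j = n - 1 := by
    by_contra hne
    have hjn : j + 1 < n := by omega
    have hAj : X j ≠ X (j+1) := fun h => hA ⟨hjn, h⟩
    exact (h3 (by omega) hjn) (zmod2_trans _ _ _ hBj hAj)
  refine ⟨hlast, fun a ha => ?_⟩
  rcases Nat.lt_trichotomy (a+1) j with h | h | h
  · exact h1 a h
  · have : a = j - 1 := by omega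
    rw [this]; have : j - 1 + 1 = j := by omega
    rw [this]; exact hBj
  · omega

/-- In case C (no adjacent defect, `j = 0`), `X` is alternating. -/
lemma caseC_alt {X : ℕ → ZMod 2} {n : ℕ} (hn : 2 ≤ n) (hC : Cn X n 0)
    (hA : ¬(0 + 1 < n ∧ X 0 = X 1)) :
    ∀ a, a + 1 < n → X a ≠ X (a+1) := by
  obtain ⟨h1, h2, h3⟩ := hC
  intro a ha
  rcases Nat.eq_zero_or_pos a with rfl | hpos
  · exact fun h => hA ⟨ha, h⟩
  · exact h2 a hpos ha

lemma Cn_alt {X : ℕ → ZMod 2} {n j : ℕ} (halt : ∀ a, a + 1 < n → X a ≠ X (a+1))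
    (hj : j = 0 ∨ j = n - 1) (hn : 2 ≤ n) : Cn X n j := by
  refine ⟨fun a ha => halt a (by omega), fun a ha han => halt a han, fun h0 hjn => ?_⟩
  omega

lemma Cn_sig {X : ℕ → ZMod 2} {n j : ℕ} (hn : 2 ≤ n) (hj : j < n) (hC : Cn X n j) :
    Cn X n (sig X n j) := by
  obtain ⟨h1, h2, h3⟩ := hC
  unfold sig
  split_ifs with hA hB hj0
  · -- case A : sig = j+1
    obtain ⟨hjn, hd⟩ := hA
    refine ⟨?_, ?_, ?_⟩
    · intro a ha
      rcases Nat.lt_trichotomy (a+1) j with h | h | h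
      · exact h1 a h
      · -- a = j-1
        have haj : a = j - 1 ∧ 0 < j := by omega
        obtain ⟨rfl, hj0⟩ := haj
        have := h3 hj0 hjn
        rw [← hd] at this
        have heq : j - 1 + 1 = j := by omega
        rw [heq]; exact this
      · omega
    · intro a ha han
      exact h2 a (by omega) han
    · intro _ hjn2
      have := h2 (j+1) (by omega) hjn2
      have heq : j + 1 - 1 = j := by omega
      rw [heq, hd]
      simpa using this
  · -- case B : sig = j-1
    obtain ⟨hj0, hd⟩ := hB
    refine ⟨?_, ?_, ?_⟩
    · intro a ha
      exact h1 a (by omega)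
    · intro a ha han
      rcases Nat.lt_trichotomy j a with h | h | h
      · exact h2 a h han
      · subst h
        exact fun h => hA ⟨han, h⟩
      · omega
    · intro h0 hjn
      have heq : j - 1 - 1 + 1 = j - 1 := by omega
      have := h1 (j-1-1) (by omega)
      rw [heq] at this
      have heq2 : j - 1 + 1 = j := by omega
      rw [heq2]
      rw [hd] at this
      exact this
  · -- case C : j = 0, sig = n-1
    subst hj0
    exact Cn_alt (caseC_alt hn ⟨h1, h2, h3⟩ hA) (Or.inr rfl) hn
  · -- case D : sig = 0
    have := caseD_alt hn hj ⟨h1, h2, h3⟩ hA hB hj0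
    exact Cn_alt this.2 (Or.inl rfl) hn

lemma sig_sig {X : ℕ → ZMod 2} {n j : ℕ} (hn : 2 ≤ n) (hj : j < n) (hC : Cn X n j) :
    sig X n (sig X n j) = j := by
  obtain ⟨h1, h2, h3⟩ := hC
  by_cases hA : j + 1 < n ∧ X j = X (j+1)
  · have hs : sig X n j = j + 1 := by rw [sig, if_pos hA]
    obtain ⟨hjn, hd⟩ := hA
    rw [hs, sig]
    have hA' : ¬(j + 1 + 1 < n ∧ X (j+1) = X (j+1+1)) := by
      rintro ⟨h, he⟩
      exact h2 (j+1) (by omega) h he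
    rw [if_neg hA', if_pos ⟨by omega, by simpa using hd⟩]
    omega
  · by_cases hB : 0 < j ∧ X (j-1) = X j
    · have hs : sig X n j = j - 1 := by rw [sig, if_neg hA, if_pos hB]
      obtain ⟨hj0, hd⟩ := hB
      rw [hs, sig]
      rw [if_pos ⟨by omega, by rw [show j - 1 + 1 = j by omega]; exact hd⟩]
      omega
    · by_cases hj0 : j = 0
      · subst hj0
        have hs : sig X n 0 = n - 1 := by rw [sig, if_neg hA, if_neg hB, if_pos rfl]
        have halt := caseC_alt hn ⟨h1, h2, h3⟩ hA
        rw [hs, sig]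
        have hA' : ¬(n - 1 + 1 < n ∧ X (n-1) = X (n-1+1)) := by
          rintro ⟨h, _⟩; omega
        have hB' : ¬(0 < n - 1 ∧ X (n-1-1) = X (n-1)) := by
          rintro ⟨h, he⟩
          have := halt (n-1-1) (by omega)
          rw [show n-1-1+1 = n-1 by omega] at this
          exact this he
        rw [if_neg hA', if_neg hB', if_neg (by omega : ¬ n - 1 = 0)]
      · have hs : sig X n j = 0 := by rw [sig, if_neg hA, if_neg hB, if_neg hj0]
        obtain ⟨hlast, halt⟩ := caseD_alt hn hj ⟨h1, h2, h3⟩ hA hB hj0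
        rw [hs, sig]
        have hA' : ¬(0 + 1 < n ∧ X 0 = X 1) := by
          rintro ⟨h, he⟩
          exact halt 0 (by omega) he
        rw [if_neg hA', if_neg (by simp : ¬(0 < 0 ∧ X (0-1) = X 0)), if_pos rfl]
        omega

lemma cn_iff {X : ℕ → ZMod 2} {n jv : ℕ} (hn : 3 ≤ n) (hj : jv < n) :
    (∀ i : ℕ, i + 2 < n →
      X (if i < jv then i else i+1) ≠ X (if i+1 < jv then i+1 else i+2)) ↔ Cn X n jv := by
  constructor
  · intro H
    refine ⟨?_, ?_, ?_⟩
    · intro a ha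
      have := H a (by omega)
      rwa [if_pos (by omega), if_pos (by omega)] at this
    · intro a hja han
      have := H (a-1) (by omega)
      rwa [if_neg (by omega), if_neg (by omega), show a-1+1 = a by omega,
        show a-1+2 = a+1 by omega] at this
    · intro h0 hn1
      have := H (jv-1) (by omega)
      rwa [if_pos (by omega), if_neg (by omega), show jv-1+2 = jv+1 by omega] at this
  · rintro ⟨h1, h2, h3⟩ i hi
    rcases Nat.lt_trichotomy (i+1) jv with h | h | h
    · rw [if_pos (by omega), if_pos h]
      exact h1 i h
    · rw [if_pos (by omega), if_neg (by omega)]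
      have := h3 (by omega) (by omega)
      rwa [show jv - 1 = i by omega, show jv + 1 = i + 2 by omega] at this
    · rw [if_neg (by omega), if_neg (by omega)]
      exact h2 (i+1) (by omega) (by omega)

lemma val_succAbove' {n : ℕ} (p : Fin (n+1)) (i : Fin n) :
    ((p.succAbove i : Fin (n+1)) : ℕ) = if i.val < p.val then i.val else i.val + 1 := by
  rw [Fin.succAbove]
  split_ifs with h1 h2 h2
  · rfl
  · exact absurd h1 (by simpa [Fin.lt_def] using h2)
  · exact absurd (by simpa [Fin.lt_def] using h2) h1
  · rfl

/-- Extension of a tuple to all of `ℕ` (by reduction mod `k+3`). -/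
def Xext (k : ℕ) (x : Fin (k+3) → ZMod 2) : ℕ → ZMod 2 :=
  fun a => x ⟨a % (k+3), Nat.mod_lt _ (by omega)⟩

lemma Xext_fin (k : ℕ) (x : Fin (k+3) → ZMod 2) (v : Fin (k+3)) :
    Xext k x v.val = x v := by
  simp [Xext, Nat.mod_eq_of_lt v.isLt]

lemma removeNth_eq (k : ℕ) (x : Fin (k+3) → ZMod 2) (j : Fin (k+3)) (i : Fin (k+2)) :
    (j.removeNth x) i = Xext k x (if i.val < j.val then i.val else i.val + 1) := by
  rw [show (j.removeNth x) i = x (j.succAbove i) from rfl, ← Xext_fin k x (j.succAbove i),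
    val_succAbove']

/-- The removed tuple is alternating iff the `Cn` condition holds. -/
lemma cond_iff (k : ℕ) (x : Fin (k+3) → ZMod 2) (j : Fin (k+3)) :
    (j.removeNth x = altA (k+2) ∨ j.removeNth x = altB (k+2)) ↔
      Cn (Xext k x) (k+3) j.val := by
  rw [alt_iff k (j.removeNth x), ← cn_iff (n := k+3) (by omega) j.isLt]
  constructor
  · intro H i hi
    have := H ⟨i, by omega⟩
    rwa [removeNth_eq, removeNth_eq, Fin.coe_castSucc, Fin.val_succ] at this
  · intro H i
    have := H i.val (by omega)
    rwa [removeNth_eq, removeNth_eq, Fin.coe_castSucc, Fin.val_succ]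

/-- `ω_k` is a group cocycle: its homogeneous group-cohomology
coboundary vanishes identically. -/
theorem omegaGDS_is_cocycle (k : ℕ) (x : Fin (k + 3) → ZMod 2) :
    ∑ j : Fin (k + 3), ((-1 : ℤ) ^ (j : ℕ)) • omegaGDS k (j.removeNth x) = 0 := by
  classical
  -- each value of omegaGDS is 2-torsion
  have tors : ∀ y : Fin (k+2) → ZMod 2, omegaGDS k y + omegaGDS k y = 0 := by
    intro y
    rw [omegaGDS]
    split_ifs
    · exact half_add_half
    · simp
  -- signs don't matter
  have hsign : ∀ j : Fin (k+3),
      ((-1 : ℤ) ^ (j : ℕ)) • omegaGDS k (j.removeNth x) = omegaGDS k (j.removeNth x) := by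
    intro j
    rcases Nat.even_or_odd (j : ℕ) with he | ho
    · rw [he.neg_one_pow, one_zsmul]
    · rw [ho.neg_one_pow, neg_one_zsmul]
      exact neg_eq_of_add_eq_zero_left (tors _)
  rw [Finset.sum_congr rfl fun j _ => hsign j]
  -- value of omegaGDS in terms of Cn
  have hval : ∀ j : Fin (k+3), Cn (Xext k x) (k+3) j.val →
      omegaGDS k (j.removeNth x) = ((1/2 : ℝ) : AddCircle (1:ℝ)) := by
    intro j hj
    rw [omegaGDS, if_pos ((cond_iff k x j).mpr hj)]
  have hval0 : ∀ j : Fin (k+3), ¬ Cn (Xext k x) (k+3) j.val → omegaGDS k (j.removeNth x) = 0 := by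
    intro j hj
    rw [omegaGDS, if_neg (fun h => hj ((cond_iff k x j).mp h))]
  -- the involution
  have hn2 : 2 ≤ (k+3) := by omega
  refine Finset.sum_involution
    (g := fun j _ => if h : Cn (Xext k x) (k+3) j.val then ⟨sig (Xext k x) (k+3) j.val, sig_lt (Xext k x) hn2 j.isLt⟩ else j)
    ?_ ?_ (fun a ha => Finset.mem_univ _) ?_
  · intro a ha
    by_cases h : Cn (Xext k x) (k+3) a.val
    · rw [dif_pos h, hval a h, hval _ (Cn_sig hn2 a.isLt h)]
      exact half_add_half
    · rw [dif_neg h, hval0 a h]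
      simp
  · intro a ha hne
    by_cases h : Cn (Xext k x) (k+3) a.val
    · rw [dif_pos h]
      intro heq
      exact sig_ne (Xext k x) hn2 a.isLt (congrArg Fin.val heq)
    · exact absurd (hval0 a h) hne
  · intro a ha
    by_cases h : Cn (Xext k x) (k+3) a.val
    · rw [dif_pos h, dif_pos (Cn_sig hn2 a.isLt h)]
      exact Fin.ext (sig_sig hn2 a.isLt h)
    · rw [dif_neg h, dif_neg h]
end

section
/- Let L be a finite abstract simplicial complex on vertex set V such that every simplex σ ∈ L is a face of an even number of simplices τ ∈ L with τ ⊋ σ. Define f : {0,1}^V → Z/2 by f(x) = Σ_{σ ∈ L} Π_{v ∈ σ} x_v (mod 2). Then for all x, f(x + 1⃗) + f(x) ≡ |L| (mod 2), where |L| is the total number of simplices of L and 1⃗ is the all-ones vector. In particular, since |L| ≡ χ(L) (mod 2), the diagonal unitary U = Π_{σ∈L} C^{|σ|−1}Z_σ satisfies X̄ U X̄ U = (−1)^{χ(L)}, where X̄ is the global bit-flip. -/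
/-!
Expanding `∏ v ∈ σ, (x v + 1)` as a sum over the faces `τ ⊆ σ` and exchanging the sums turns
`∑ σ ∈ L, ∏ v ∈ σ, (x v + 1)` into `∑ τ, #{σ ∈ L | τ ⊆ σ} • ∏ v ∈ τ, x v`. By downward closure the only
`τ` that occur are `∅`, with coefficient `#L`, and the simplices of `L`, whose coefficient
`1 + #{strict cofaces}` is odd. Hence the sum is `#L + f x` in characteristic two.
The sign statement follows because `χ(L) ≡ #L (mod 2)`.
-/

open Finset

section SimplicialComplex

variable {V : Type*} [DecidableEq V] {L : Finset (Finset V)}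

theorem sum_sum_powerset_eq_sum_card_supersets_nsmul {M : Type*} [AddCommMonoid M]
    (hdown : ∀ σ ∈ L, ∀ τ : Finset V, τ ⊆ σ → τ ≠ ∅ → τ ∈ L) (g : Finset V → M) :
    ∑ σ ∈ L, ∑ τ ∈ σ.powerset, g τ = ∑ τ ∈ insert ∅ L, #{σ ∈ L | τ ⊆ σ} • g τ := by
  simp_rw [← sum_const]
  refine sum_comm' fun σ τ => ?_
  simp only [mem_powerset, mem_filter, mem_insert]
  constructor
  · rintro ⟨hσ, hτσ⟩
    exact ⟨⟨hσ, hτσ⟩, or_iff_not_imp_left.mpr (hdown σ hσ τ hτσ)⟩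
  · rintro ⟨hστ, -⟩
    exact hστ

theorem card_supersets_eq_card_ssupersets_add_one {τ : Finset V} (hτ : τ ∈ L) :
    #{σ ∈ L | τ ⊆ σ} = #{σ ∈ L | τ ⊂ σ} + 1 := by
  have hinsert : {σ ∈ L | τ ⊆ σ} = insert τ {σ ∈ L | τ ⊂ σ} := by
    ext σ
    rcases eq_or_ne σ τ with rfl | hστ
    · simp [hτ]
    · simp [Finset.ssubset_iff_subset_ne, hστ, hστ.symm]
  rw [hinsert, card_insert_of_notMem (by simp)]

theorem sum_prod_add_one_add_sum_prod {R : Type*} [CommRing R] [CharP R 2]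
    (hne : ∅ ∉ L) (hdown : ∀ σ ∈ L, ∀ τ : Finset V, τ ⊆ σ → τ ≠ ∅ → τ ∈ L)
    (heven : ∀ σ ∈ L, Even #{τ ∈ L | σ ⊂ τ}) (x : V → R) :
    ∑ σ ∈ L, ∏ v ∈ σ, (x v + 1) + ∑ σ ∈ L, ∏ v ∈ σ, x v = #L := by
  have hcoeff : ∀ τ ∈ L, (#{σ ∈ L | τ ⊆ σ} : R) = 1 := fun τ hτ => by
    rw [card_supersets_eq_card_ssupersets_add_one hτ, Nat.cast_add_one,
      (CharP.cast_eq_zero_iff R 2 _).mpr (even_iff_two_dvd.mp (heven τ hτ)), zero_add]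
  calc ∑ σ ∈ L, ∏ v ∈ σ, (x v + 1) + ∑ σ ∈ L, ∏ v ∈ σ, x v
      = (#L + ∑ τ ∈ L, ∏ v ∈ τ, x v) + ∑ σ ∈ L, ∏ v ∈ σ, x v := by
        simp_rw [prod_add_one, sum_sum_powerset_eq_sum_card_supersets_nsmul hdown,
          sum_insert hne, nsmul_eq_mul]
        rw [sum_congr rfl fun τ hτ => by rw [hcoeff τ hτ, one_mul]]
        simp [filter_true_of_mem]
    _ = #L := by rw [add_assoc, CharTwo.add_self_eq_zero, add_zero]

omit [DecidableEq V] in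
theorem cast_sum_neg_one_pow_eq_card :
    ((∑ σ ∈ L, (-1 : ℤ) ^ (#σ - 1) : ℤ) : ZMod 2) = #L := by
  simp [CharTwo.neg_eq]

end SimplicialComplex

theorem neg_one_zpow_eq_pow_val_intCast {R : Type*} [DivisionRing R] (z : ℤ) :
    (-1 : R) ^ z = (-1) ^ (z : ZMod 2).val := by
  rcases Int.even_or_odd z with h | h
  · rw [h.neg_one_zpow, h.intCast_zmod_two, ZMod.val_zero, pow_zero]
  · rw [h.neg_one_zpow, h.intCast_zmod_two, ZMod.val_one, pow_one]

theorem even_coface_flip_parity_general {V : Type*} [DecidableEq V]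
    (L : Finset (Finset V))
    (hne : ∅ ∉ L)
    (hdown : ∀ σ ∈ L, ∀ τ : Finset V, τ ⊆ σ → τ ≠ ∅ → τ ∈ L)
    (heven : ∀ σ ∈ L, Even (L.filter (fun τ => σ ⊂ τ)).card) :
    (∀ x : V → ZMod 2,
      (∑ σ ∈ L, ∏ v ∈ σ, (x v + 1)) + ∑ σ ∈ L, ∏ v ∈ σ, x v = (L.card : ZMod 2)) ∧
    ∀ x : V → ZMod 2,
      ((-1 : ℚ) ^ ((∑ σ ∈ L, ∏ v ∈ σ, (x v + 1)) + ∑ σ ∈ L, ∏ v ∈ σ, x v).val)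
        = (-1 : ℚ) ^ (∑ σ ∈ L, (-1 : ℤ) ^ (σ.card - 1)) := by
  have hflip := sum_prod_add_one_add_sum_prod (R := ZMod 2) hne hdown heven
  refine ⟨hflip, fun x => ?_⟩
  rw [hflip, neg_one_zpow_eq_pow_val_intCast, cast_sum_neg_one_pow_eq_card]

/-- if every simplex of a finite abstract simplicial complex `L` is a face of
an even number of strictly larger simplices of `L`, then the boolean function
`f(x) = Σ_{σ∈L} Π_{v∈σ} x_v` over `ℤ/2` satisfies `f(x + 1⃗) + f(x) = |L| (mod 2)`.
In particular, since `|L| ≡ χ(L) (mod 2)`, the unitary `U = Π_σ C^{|σ|−1}Z_σ`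
satisfies `X̄ U X̄ U = (−1)^{χ(L)}`. -/
theorem even_coface_flip_parity {V : Type*} [Fintype V] [DecidableEq V]
    (L : Finset (Finset V))
    (hne : ∅ ∉ L)
    (hdown : ∀ σ ∈ L, ∀ τ : Finset V, τ ⊆ σ → τ ≠ ∅ → τ ∈ L)
    (heven : ∀ σ ∈ L, Even (L.filter (fun τ => σ ⊂ τ)).card) :
    (∀ x : V → ZMod 2,
      (∑ σ ∈ L, ∏ v ∈ σ, (x v + 1)) + ∑ σ ∈ L, ∏ v ∈ σ, x v = (L.card : ZMod 2)) ∧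
    ∀ x : V → ZMod 2,
      ((-1 : ℚ) ^ ((∑ σ ∈ L, ∏ v ∈ σ, (x v + 1)) + ∑ σ ∈ L, ∏ v ∈ σ, x v).val)
        = (-1 : ℚ) ^ (∑ σ ∈ L, (-1 : ℤ) ^ (σ.card - 1)) :=
  even_coface_flip_parity_general L hne hdown heven
end

section
/- Cocycle circuits commute with the global symmetry exactly on mod-n cycles: let ω : G^{k+2} → (1/n)Z/Z be a homogeneous cocycle, C = Σ_a c_a Δ_a an integral simplicial k-chain, and define Φ_C(x) = Σ_a c_a ω(e, x|_{Δ_a}) for vertex labelings x : V → G. Then for every g ∈ G, Φ_C(g^{-1}·x) − Φ_C(x) = Φ'_{∂C}(x), where Φ'_{D}(x) = Σ over (k−1)-simplices in D with multiplicity of ω(g, e, x|_{simplex}), and ∂ is the integral simplicial boundary. In particular Φ_C(g^{-1}·x) = Φ_C(x) for all g and x if and only if the circuit on ∂C is trivial; for ω valued in (1/n)Z/Z this holds whenever ∂C ≡ 0 (mod n), with the convention that the boundary of a 0-chain Σ_a c_a (pt_a) is the integer Σ_a c_a. -/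
/-- The simplicial boundary operator on integral chains of ordered simplices
(for `n = 0` this is the reduced convention: the boundary of a point is the
"empty simplex", so the boundary of a 0-chain records the sum of its coefficients). -/
noncomputable def bdryChain {W : Type*} (n : ℕ) (c : (Fin (n + 1) → W) →₀ ℤ) :
    (Fin n → W) →₀ ℤ :=
  c.sum fun w a =>
    a • ∑ i : Fin (n + 1), ((-1 : ℤ) ^ (i : ℕ)) • Finsupp.single (i.removeNth w) 1

/-- `Φ_C(x) = Σ_a c_a ω(e, x|_{Δ_a})` : the phase of the cochain circuit by `ω` on `C`. -/
noncomputable def PhiC {V G : Type*} [Group G] (k : ℕ)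
    (ω : (Fin (k + 2) → G) → AddCircle (1 : ℝ))
    (C : (Fin (k + 1) → V) →₀ ℤ) (x : V → G) : AddCircle (1 : ℝ) :=
  C.sum fun Δ a => a • ω (Fin.cons 1 (fun i => x (Δ i)))

/-- `Φ'_D(x) = Σ ω(g, e, x|_simplex)` over the `(k−1)`-simplices of `D`, with multiplicity. -/
noncomputable def PhiBdry {V G : Type*} [Group G] (k : ℕ)
    (ω : (Fin (k + 2) → G) → AddCircle (1 : ℝ)) (g : G)
    (D : (Fin k → V) →₀ ℤ) (x : V → G) : AddCircle (1 : ℝ) :=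
  D.sum fun s a => a • ω (Fin.cons g (Fin.cons 1 (fun i => x (s i))))

lemma removeNth_succ_cons {n : ℕ} {α : Type*} (i : Fin (n+1)) (a : α) (f : Fin (n+1) → α) :
    Fin.removeNth i.succ (Fin.cons a f : Fin (n+2) → α)
      = (Fin.cons a (Fin.removeNth i f) : Fin (n+1) → α) := by
  funext j
  cases j using Fin.cases with
  | zero => simp [Fin.removeNth, Fin.succAbove]
  | succ j =>
    simp only [Fin.removeNth, Fin.cons_succ]
    rw [Fin.succ_succAbove_succ]
    simp [Fin.removeNth]

lemma key {G : Type*} [Group G] (k : ℕ) (ω : (Fin (k + 2) → G) → AddCircle (1 : ℝ))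
    (hhom : ∀ (h : G) (y : Fin (k + 2) → G), ω (fun i => h * y i) = ω y)
    (hcoc : ∀ y : Fin (k + 3) → G,
      ∑ j : Fin (k + 3), ((-1 : ℤ) ^ (j : ℕ)) • ω (j.removeNth y) = 0)
    (g : G) (z : Fin (k+1) → G) :
    ω (Fin.cons 1 (fun i => g⁻¹ * z i)) - ω (Fin.cons 1 z)
      = ∑ i : Fin (k+1), ((-1:ℤ)^(i:ℕ)) • ω (Fin.cons g (Fin.cons 1 (Fin.removeNth i z))) := by
  have h := hcoc (Fin.cons g (Fin.cons 1 z) : Fin (k+3) → G)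
  rw [Fin.sum_univ_succ, Fin.sum_univ_succ] at h
  have h0 : (0 : Fin (k+3)).removeNth (Fin.cons g (Fin.cons 1 z) : Fin (k+3) → G)
      = (Fin.cons 1 z : Fin (k+2) → G) := by
    simp [Fin.removeNth_zero]
  have h1 : ((0 : Fin (k+2)).succ).removeNth (Fin.cons g (Fin.cons 1 z) : Fin (k+3) → G)
      = (Fin.cons g z : Fin (k+2) → G) := by
    rw [removeNth_succ_cons]
    simp [Fin.removeNth_zero]
  have hg : ω (Fin.cons g z) = ω (Fin.cons 1 (fun i => g⁻¹ * z i)) := by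
    rw [← hhom g (Fin.cons 1 fun i => g⁻¹ * z i)]
    congr 1
    funext j
    cases j using Fin.cases with
    | zero => simp
    | succ j => simp
  have h2 : ∀ j : Fin (k+1), (j.succ.succ : Fin (k+3)).removeNth (Fin.cons g (Fin.cons 1 z) : Fin (k+3) → G)
      = (Fin.cons g (Fin.cons 1 (Fin.removeNth j z)) : Fin (k+2) → G) := by
    intro j
    rw [removeNth_succ_cons, removeNth_succ_cons]
  simp only [h0, h1, hg, h2, Fin.val_zero, pow_zero, one_zsmul, Fin.val_succ] at h
  have hp : ∀ j : Fin (k+1), ((-1:ℤ)^((j:ℕ)+1+1)) = (-1:ℤ)^(j:ℕ) := by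
    intro j; ring
  simp only [hp] at h
  rw [pow_one, neg_one_zsmul] at h
  linear_combination (norm := abel) -h

/-- cocycle circuits commute with the global symmetry exactly on mod-`n`
cycles: `Φ_C(g⁻¹·x) − Φ_C(x) = Φ'_{∂C}(x)`; the circuit is symmetric iff the circuit on
`∂C` is trivial, and for `ω` valued in `(1/n)ℤ/ℤ` this holds whenever `∂C ≡ 0 (mod n)`. -/
theorem cocycle_circuit_cycle_commutativity {V G : Type*} [Group G] (k n : ℕ)
    (ω : (Fin (k + 2) → G) → AddCircle (1 : ℝ))
    (hω : ∀ y, n • ω y = 0)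
    (hhom : ∀ (h : G) (y : Fin (k + 2) → G), ω (fun i => h * y i) = ω y)
    (hcoc : ∀ y : Fin (k + 3) → G,
      ∑ j : Fin (k + 3), ((-1 : ℤ) ^ (j : ℕ)) • ω (j.removeNth y) = 0)
    (C : (Fin (k + 1) → V) →₀ ℤ) :
    (∀ (g : G) (x : V → G),
        PhiC k ω C (fun v => g⁻¹ * x v) - PhiC k ω C x
          = PhiBdry k ω g (bdryChain k C) x) ∧
    ((∀ (g : G) (x : V → G), PhiC k ω C (fun v => g⁻¹ * x v) = PhiC k ω C x)
      ↔ ∀ (g : G) (x : V → G), PhiBdry k ω g (bdryChain k C) x = 0) ∧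
    ((∀ s : Fin k → V, (n : ℤ) ∣ bdryChain k C s) →
      ∀ (g : G) (x : V → G), PhiC k ω C (fun v => g⁻¹ * x v) = PhiC k ω C x) := by
  have main : ∀ (g : G) (x : V → G),
      PhiC k ω C (fun v => g⁻¹ * x v) - PhiC k ω C x
        = PhiBdry k ω g (bdryChain k C) x := by
    intro g x
    -- LHS
    have hL : PhiC k ω C (fun v => g⁻¹ * x v) - PhiC k ω C x
        = C.sum fun Δ a => a • (ω (Fin.cons 1 (fun i => g⁻¹ * x (Δ i)))
            - ω (Fin.cons 1 (fun i => x (Δ i)))) := by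
      rw [PhiC, PhiC, ← Finsupp.sum_sub]
      congr 1
      funext Δ a
      rw [smul_sub]
    -- RHS via the lift hom
    set T : ((Fin k → V) →₀ ℤ) →+ AddCircle (1 : ℝ) :=
      Finsupp.liftAddHom (fun s => zmultiplesHom _
        (ω (Fin.cons g (Fin.cons 1 (fun i => x (s i)))))) with hT
    have hR : PhiBdry k ω g (bdryChain k C) x = T (bdryChain k C) := by
      rw [hT, Finsupp.liftAddHom_apply]
      rfl
    rw [hL, hR, bdryChain, map_finsuppSum]
    apply Finsupp.sum_congr
    intro Δ _
    rw [AddMonoidHom.map_zsmul, map_sum]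
    have : ∀ i : Fin (k+1),
        T (((-1:ℤ)^(i:ℕ)) • Finsupp.single (i.removeNth Δ) 1)
          = ((-1:ℤ)^(i:ℕ)) • ω (Fin.cons g (Fin.cons 1
              (Fin.removeNth i (fun j => x (Δ j))))) := by
      intro i
      rw [AddMonoidHom.map_zsmul, hT, Finsupp.liftAddHom_apply_single]
      simp only [zmultiplesHom_apply, one_zsmul]
      rfl
    simp only [this]
    rw [key k ω hhom hcoc g (fun j => x (Δ j))]
  refine ⟨main, ?_, ?_⟩
  · constructor
    · intro h g x
      rw [← main g x, h g x, sub_self]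
    · intro h g x
      have := main g x
      rw [h g x] at this
      exact sub_eq_zero.mp this
  · intro hdvd g x
    have hz : PhiBdry k ω g (bdryChain k C) x = 0 := by
      rw [PhiBdry]
      apply Finset.sum_eq_zero
      intro s _
      obtain ⟨m, hm⟩ := hdvd s
      show (bdryChain k C) s • ω (Fin.cons g (Fin.cons 1 fun i => x (s i))) = 0
      rw [hm, mul_comm, mul_smul, natCast_zsmul, hω, smul_zero]
    have := main g x
    rw [hz] at this
    exact sub_eq_zero.mp this
end

section
/- Let L be a finite simplicial complex in which the link of every simplex has an even number of simplices, and let L' be its barycentric subdivision with simplices oriented by the face-relation order. Fix 0 ≤ k' < k ≤ dim L with ⌊k/2⌋ ≤ k', and fix a k'-simplex Δ^{k'} = (τ_0 < ⋯ < τ_{k'}) of L'. Then the number N(Δ^{k'}) of k-simplices (σ_0 < ⋯ < σ_k) of L' from which (τ_0,...,τ_{k'}) is obtained by omitting one or more entries σ_j with odd index j is even. -/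
/-!
Sort the chains `σ` counted by `N(τ)` according to the last position `j` at which `σ_j` is not
an entry of `τ`; this `j` is odd, so `σ_{j-1}` exists. Replacing `σ_j` by any `x ∈ L` that keeps
the chain strictly increasing changes neither `j` nor the remaining entries, so each class is
parametrised by the admissible `x`. For `j < k` these form the whole interval
`(σ_{j-1}, σ_{j+1})` of the Boolean lattice (its members are faces of `σ_{j+1}`, hence in `L`),
of size `2 ^ (|σ_{j+1}| - |σ_{j-1}|) - 2`.
For `j = k` they are the simplices strictly containing `σ_{k-1}`, in bijection with the link of
`σ_{k-1}` via `x ↦ x \ σ_{k-1}`. Both numbers are even.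
-/

open Finset Function

namespace Finset

theorem even_card_of_even_card_fibers {ι β : Type*} [DecidableEq β] {s : Finset ι} (f : ι → β)
    (h : ∀ a ∈ s, Even #{x ∈ s | f x = f a}) : Even #s := by
  rw [card_eq_sum_card_image f s]
  refine even_sum _ fun b hb => ?_
  obtain ⟨a, ha, rfl⟩ := mem_image.1 hb
  exact h a ha

theorem even_card_Ioo_finset {V : Type*} [DecidableEq V] {s t : Finset V} (h : s < t) :
    Even #(Ioo s t) := by
  rw [card_Ioo_finset h.le]
  have hpos : #t - #s ≠ 0 := Nat.sub_ne_zero_of_lt (card_lt_card h)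
  exact (even_two.pow_of_ne_zero hpos).tsub even_two

end Finset

section SimplicialComplex

variable {V : Type*} [DecidableEq V] {L : Finset (Finset V)}

def link (L : Finset (Finset V)) (σ : Finset V) : Finset (Finset V) :=
  {τ ∈ L | τ ∩ σ = ∅ ∧ τ ∪ σ ∈ L}

theorem filter_lt_lt_eq_Ioo (hdown : ∀ σ ∈ L, ∀ τ : Finset V, τ ⊆ σ → τ ≠ ∅ → τ ∈ L)
    {a b : Finset V} (hb : b ∈ L) : {x ∈ L | a < x ∧ x < b} = Ioo a b := by
  ext x
  simp only [mem_filter, mem_Ioo, and_iff_right_iff_imp]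
  exact fun ⟨hax, hxb⟩ => hdown b hb x hxb.le (ne_bot_of_gt hax)

theorem card_filter_gt_eq_card_link (hne : ∅ ∉ L)
    (hdown : ∀ σ ∈ L, ∀ τ : Finset V, τ ⊆ σ → τ ≠ ∅ → τ ∈ L) (a : Finset V) :
    #{x ∈ L | a < x} = #(link L a) := by
  refine card_nbij' (· \ a) (· ∪ a) ?_ ?_ ?_ ?_
  · intro x hx
    simp only [coe_filter, Set.mem_ofPred_eq, link] at hx ⊢
    refine ⟨hdown x hx.1 _ sdiff_subset (sdiff_eq_empty_iff_subset.not.2 hx.2.not_ge),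
      sdiff_inter_self a x, by rw [sdiff_union_of_subset hx.2.le]; exact hx.1⟩
  · intro y hy
    simp only [coe_filter, Set.mem_ofPred_eq, link] at hy ⊢
    have hy0 : y.Nonempty := nonempty_iff_ne_empty.2 fun h => hne (h ▸ hy.1)
    refine ⟨hy.2.2, Finset.ssubset_iff_subset_ne.2 ⟨subset_union_right, fun h => ?_⟩⟩
    obtain ⟨v, hv⟩ := hy0
    have hva : v ∈ y ∩ a := mem_inter.2 ⟨hv, h ▸ mem_union_left a hv⟩
    simp [hy.2.1] at hva
  · intro x hx
    simp only [coe_filter, Set.mem_ofPred_eq] at hx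
    exact sdiff_union_of_subset hx.2.le
  · intro y hy
    simp only [coe_filter, Set.mem_ofPred_eq, link] at hy
    exact union_sdiff_cancel_right (disjoint_iff_inter_eq_empty.2 hy.2.1)

end SimplicialComplex

theorem StrictMono.strictMono_update_iff {ι β : Type*} [Preorder ι] [DecidableEq ι] [Preorder β]
    {f : ι → β} (hf : StrictMono f) {i : ι} {b : β} :
    StrictMono (update f i b) ↔ (∀ j < i, f j < b) ∧ ∀ j, i < j → b < f j := by
  constructor
  · intro h
    refine ⟨fun j hj => ?_, fun j hj => ?_⟩
    · simpa [update_of_ne hj.ne] using h hj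
    · simpa [update_of_ne hj.ne'] using h hj
  · rintro ⟨hlt, hgt⟩ a c hac
    by_cases ha : a = i
    · subst ha
      rw [update_self, update_of_ne hac.ne']
      exact hgt c hac
    by_cases hc : c = i
    · subst hc
      rw [update_self, update_of_ne ha]
      exact hlt a hac
    · rw [update_of_ne ha, update_of_ne hc]
      exact hf hac

section Omission

variable {α : Type*} {k k' : ℕ} (τ : Fin (k' + 1) → α)

def IsOddOmission (σ : Fin (k + 1) → α) : Prop :=
  ∃ ι : Fin (k' + 1) → Fin (k + 1), StrictMono ι ∧ (∀ m, σ (ι m) = τ m) ∧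
    ∀ j : Fin (k + 1), (∀ m, ι m ≠ j) → j.val % 2 = 1

open Classical in
noncomputable def omittedPositions (σ : Fin (k + 1) → α) : Finset (Fin (k + 1)) :=
  {j | σ j ∉ Set.range τ}

noncomputable def lastOmitted (σ : Fin (k + 1) → α) : Fin (k + 1) :=
  (omittedPositions τ σ).sup id

noncomputable def forgetLastOmitted (σ : Fin (k + 1) → α) : Fin (k + 1) × (Fin k → α) :=
  (lastOmitted τ σ, Fin.removeNth (lastOmitted τ σ) σ)

variable {τ} {σ : Fin (k + 1) → α} {j : Fin (k + 1)}

theorem mem_omittedPositions : j ∈ omittedPositions τ σ ↔ σ j ∉ Set.range τ := by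
  simp [omittedPositions]

theorem omittedPositions_nonempty (hσ : Injective σ) (hk : k' < k) :
    (omittedPositions τ σ).Nonempty := by
  by_contra hempty
  have hkept : ∀ j, ∃ m, τ m = σ j := fun j =>
    not_not.1 fun hj => hempty ⟨j, mem_omittedPositions.2 hj⟩
  choose f hf using hkept
  have hf_inj : Injective f := fun a b hab => hσ (by rw [← hf a, ← hf b, hab])
  have := Fintype.card_le_of_injective f hf_inj
  simp only [Fintype.card_fin] at this
  omega

theorem lastOmitted_mem (h : (omittedPositions τ σ).Nonempty) :
    lastOmitted τ σ ∈ omittedPositions τ σ := by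
  obtain ⟨i, hi, he⟩ := exists_mem_eq_sup _ h id
  rw [lastOmitted, he]
  exact hi

theorem omittedPositions_update {x : α} (hj : σ j ∉ Set.range τ) (hx : x ∉ Set.range τ) :
    omittedPositions τ (update σ j x) = omittedPositions τ σ := by
  ext i
  by_cases hi : i = j
  · subst hi
    simp [mem_omittedPositions, hj, hx]
  · simp [mem_omittedPositions, update_of_ne hi]

theorem ne_of_notMem_range {ι : Fin (k' + 1) → Fin (k + 1)} (hι : ∀ m, σ (ι m) = τ m)
    (hj : σ j ∉ Set.range τ) (m : Fin (k' + 1)) : ι m ≠ j :=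
  fun h => hj ⟨m, h ▸ (hι m).symm⟩

namespace IsOddOmission

theorem odd_of_mem_omittedPositions (h : IsOddOmission τ σ) (hj : j ∈ omittedPositions τ σ) :
    j.val % 2 = 1 := by
  obtain ⟨ι, -, hι, hodd⟩ := h
  exact hodd j (ne_of_notMem_range hι (mem_omittedPositions.1 hj))

theorem update (h : IsOddOmission τ σ) (hj : σ j ∉ Set.range τ) (x : α) :
    IsOddOmission τ (Function.update σ j x) := by
  obtain ⟨ι, hιmono, hι, hodd⟩ := h
  exact ⟨ι, hιmono, fun m => by rw [update_of_ne (ne_of_notMem_range hι hj m), hι], hodd⟩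

theorem notMem_range_of_injective_update (h : IsOddOmission τ σ) (hj : σ j ∉ Set.range τ)
    {x : α} (hinj : Injective (Function.update σ j x)) : x ∉ Set.range τ := by
  rintro ⟨m, rfl⟩
  obtain ⟨ι, -, hι, -⟩ := h
  have hne := ne_of_notMem_range hι hj m
  exact hne (hinj (by rw [update_self, update_of_ne hne, hι]))

end IsOddOmission

end Omission

section Chains

variable {α : Type*} [Preorder α] {k k' : ℕ}

theorem even_card_filter_strictMono_update [DecidableLT α] (L : Finset α)
    (hIoo : ∀ a ∈ L, ∀ b ∈ L, a < b → Even #{x ∈ L | a < x ∧ x < b})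
    (hIoi : ∀ a ∈ L, Even #{x ∈ L | a < x})
    {σ : Fin (k + 1) → α} (hσ : StrictMono σ) (hσL : ∀ i, σ i ∈ L) {j : Fin (k + 1)}
    (hj : j ≠ 0) : Even #{x ∈ L | StrictMono (update σ j x)} := by
  obtain ⟨i, rfl⟩ := Fin.exists_succ_eq.2 hj
  have hbelow : ∀ x, (∀ i' < i.succ, σ i' < x) ↔ σ i.castSucc < x := fun x =>
    ⟨fun h => h _ i.castSucc_lt_succ,
      fun h i' hi' => (hσ.monotone (Fin.le_castSucc_iff.2 hi')).trans_lt h⟩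
  rcases Fin.eq_castSucc_or_eq_last i.succ with ⟨l, hl⟩ | hl
  · have habove : ∀ x, (∀ i', i.succ < i' → x < σ i') ↔ x < σ l.succ := fun x =>
      ⟨fun h => h _ (hl ▸ l.castSucc_lt_succ),
        fun h i' hi' => h.trans_le (hσ.monotone (Fin.castSucc_lt_iff_succ_le.1 (hl ▸ hi')))⟩
    rw [filter_congr fun x _ => hσ.strictMono_update_iff.trans (and_congr (hbelow x) (habove x))]
    exact hIoo _ (hσL _) _ (hσL _) (hσ (i.castSucc_lt_succ.trans (hl ▸ l.castSucc_lt_succ)))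
  · have habove : ∀ x, ∀ i', i.succ < i' → x < σ i' := fun x i' hi' =>
      absurd (hl ▸ hi') (Fin.le_last i').not_gt
    rw [filter_congr fun x _ => hσ.strictMono_update_iff.trans
      ((and_iff_left (habove x)).trans (hbelow x))]
    exact hIoi _ (hσL _)

open Classical in
noncomputable def oddOmissionChains (τ : Fin (k' + 1) → α) (L : Finset α) (k : ℕ) :
    Finset (Fin (k + 1) → α) :=
  {σ ∈ Fintype.piFinset fun _ => L | StrictMono σ ∧ IsOddOmission τ σ}

variable {τ : Fin (k' + 1) → α} {L : Finset α} {σ : Fin (k + 1) → α}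

theorem mem_oddOmissionChains :
    σ ∈ oddOmissionChains τ L k ↔ StrictMono σ ∧ (∀ j, σ j ∈ L) ∧ IsOddOmission τ σ := by
  simp only [oddOmissionChains, mem_filter, Fintype.mem_piFinset]
  exact and_left_comm

open Classical in
theorem filter_forgetLastOmitted_eq_image [DecidableLT α] (hσ : σ ∈ oddOmissionChains τ L k)
    (hj : σ (lastOmitted τ σ) ∉ Set.range τ) :
    {σ' ∈ oddOmissionChains τ L k | forgetLastOmitted τ σ' = forgetLastOmitted τ σ} =
      {x ∈ L | StrictMono (update σ (lastOmitted τ σ) x)}.image (update σ (lastOmitted τ σ)) := by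
  set j := lastOmitted τ σ
  obtain ⟨-, hσL, hσodd⟩ := mem_oddOmissionChains.1 hσ
  ext σ'
  simp only [mem_filter, mem_image, forgetLastOmitted, Prod.mk.injEq]
  constructor
  · rintro ⟨hσ', hj', hrem⟩
    rw [hj'] at hrem
    have hσ'_eq : update σ j (σ' j) = σ' := by
      rw [← Fin.insertNth_removeNth, ← hrem, Fin.insertNth_self_removeNth]
    obtain ⟨hσ'mono, hσ'L, -⟩ := mem_oddOmissionChains.1 hσ'
    exact ⟨σ' j, ⟨hσ'L j, by rwa [hσ'_eq]⟩, hσ'_eq⟩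
  · rintro ⟨x, ⟨hxL, hmono⟩, rfl⟩
    have hx := hσodd.notMem_range_of_injective_update hj hmono.injective
    have hlast : lastOmitted τ (update σ j x) = j := by
      rw [lastOmitted, omittedPositions_update hj hx]
      rfl
    refine ⟨mem_oddOmissionChains.2 ⟨hmono, ?_, hσodd.update hj x⟩, hlast, ?_⟩
    · exact (forall_update_iff σ fun _ y => y ∈ L).2 ⟨hxL, fun i _ => hσL i⟩
    · rw [hlast, Fin.removeNth_update]

theorem even_card_oddOmissionChains [DecidableLT α] (τ : Fin (k' + 1) → α) (L : Finset α)
    (hk : k' < k) (hIoo : ∀ a ∈ L, ∀ b ∈ L, a < b → Even #{x ∈ L | a < x ∧ x < b})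
    (hIoi : ∀ a ∈ L, Even #{x ∈ L | a < x}) : Even #(oddOmissionChains τ L k) := by
  classical
  refine even_card_of_even_card_fibers (forgetLastOmitted τ) fun σ hσ => ?_
  obtain ⟨hσmono, hσL, hσodd⟩ := mem_oddOmissionChains.1 hσ
  have hj : lastOmitted τ σ ∈ omittedPositions τ σ :=
    lastOmitted_mem (omittedPositions_nonempty hσmono.injective hk)
  rw [filter_forgetLastOmitted_eq_image hσ (mem_omittedPositions.1 hj),
    card_image_of_injective _ (update_injective σ _)]
  refine even_card_filter_strictMono_update L hIoo hIoi hσmono hσL fun h0 => ?_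
  simpa [h0] using hσodd.odd_of_mem_omittedPositions hj

end Chains

theorem barycentric_odd_omission_count_even_general {V : Type*} [DecidableEq V]
    (L : Finset (Finset V))
    (hne : ∅ ∉ L)
    (hdown : ∀ σ ∈ L, ∀ τ : Finset V, τ ⊆ σ → τ ≠ ∅ → τ ∈ L)
    (hlink : ∀ σ ∈ L,
      Even ((L.filter (fun τ => τ ∩ σ = ∅ ∧ τ ∪ σ ∈ L)).card))
    (k k' : ℕ)
    (hk' : k' < k)
    (τ : Fin (k' + 1) → Finset V) :
    Even (Nat.card {σ : Fin (k + 1) → Finset V //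
      StrictMono σ ∧ (∀ j, σ j ∈ L) ∧
      ∃ ι : Fin (k' + 1) → Fin (k + 1), StrictMono ι ∧
        (∀ m, σ (ι m) = τ m) ∧
        ∀ j : Fin (k + 1), (∀ m, ι m ≠ j) → j.val % 2 = 1}) := by
  show Even (Nat.card {σ // StrictMono σ ∧ (∀ j, σ j ∈ L) ∧ IsOddOmission τ σ})
  simp only [← mem_oddOmissionChains, Nat.card_eq_finsetCard]
  refine even_card_oddOmissionChains τ L hk' (fun a _ b hb hab => ?_) (fun a ha => ?_)
  · rw [filter_lt_lt_eq_Ioo hdown hb]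
    exact even_card_Ioo_finset hab
  · rw [card_filter_gt_eq_card_link hne hdown]
    exact hlink a ha

/-- in a finite simplicial complex `L` whose every link has an even number
of simplices, with `⌊k/2⌋ ≤ k' < k ≤ dim L`, for any fixed `k'`-simplex
`(τ_0 < ⋯ < τ_{k'})` of the barycentric subdivision `L'`, the number of `k`-simplices
`(σ_0 < ⋯ < σ_k)` of `L'` from which `(τ_0,…,τ_{k'})` is obtained by omitting one or
more odd-index entries is even. -/
theorem barycentric_odd_omission_count_even {V : Type*} [Fintype V] [DecidableEq V]
    (L : Finset (Finset V))
    (hne : ∅ ∉ L)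
    (hdown : ∀ σ ∈ L, ∀ τ : Finset V, τ ⊆ σ → τ ≠ ∅ → τ ∈ L)
    (hlink : ∀ σ ∈ L,
      Even ((L.filter (fun τ => τ ∩ σ = ∅ ∧ τ ∪ σ ∈ L)).card))
    (d k k' : ℕ)
    (hdim : ∀ σ ∈ L, σ.card ≤ d + 1)
    (hk : k ≤ d) (hk' : k' < k) (hk'2 : k / 2 ≤ k')
    (τ : Fin (k' + 1) → Finset V)
    (hτmono : StrictMono τ) (hτL : ∀ m, τ m ∈ L) :
    Even (Nat.card {σ : Fin (k + 1) → Finset V //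
      StrictMono σ ∧ (∀ j, σ j ∈ L) ∧
      ∃ ι : Fin (k' + 1) → Fin (k + 1), StrictMono ι ∧
        (∀ m, σ (ι m) = τ m) ∧
        ∀ j : Fin (k + 1), (∀ m, ι m ≠ j) → j.val % 2 = 1}) :=
  barycentric_odd_omission_count_even_general L hne hdown hlink k k' hk' τ
end

section
/- Let L be a finite simplicial complex. Then the total number of simplices of L is congruent to the Euler characteristic χ(L) = Σ_{σ∈L} (−1)^{dim σ} modulo 2. Consequently, if every (d−1)-simplex of a pure d-dimensional complex L lies in exactly two d-simplices and every lower simplex has a link with even number of simplices, the diagonal operator Π_{σ∈L} C^{dim σ}Z_σ anticommutes or commutes with the global bit-flip according to the parity of χ(L). -/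
open Finset

-- link card = number of strict supersets
lemma link_eq_strict_supersets {V : Type*} [DecidableEq V]
    (L : Finset (Finset V)) (hne : ∅ ∉ L)
    (hdown : ∀ σ ∈ L, ∀ τ : Finset V, τ ⊆ σ → τ ≠ ∅ → τ ∈ L)
    (σ : Finset V) :
    (L.filter (fun τ => τ ∩ σ = ∅ ∧ τ ∪ σ ∈ L)).card
      = (L.filter (fun π => σ ⊂ π)).card := by
  apply Finset.card_bij (fun τ _ => τ ∪ σ)
  · intro τ hτ
    simp only [mem_filter] at hτ ⊢
    obtain ⟨hτL, hdisj, hu⟩ := hτ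
    refine ⟨hu, ?_⟩
    refine Finset.ssubset_iff_of_subset (subset_union_right) |>.2 ?_
    obtain ⟨v, hv⟩ := Finset.nonempty_iff_ne_empty.2 (fun h => hne (h ▸ hτL))
    exact ⟨v, Finset.mem_union_left _ hv, fun hvσ =>
      (Finset.eq_empty_iff_forall_notMem.1 hdisj v) (Finset.mem_inter.2 ⟨hv, hvσ⟩)⟩
  · intro τ₁ h₁ τ₂ h₂ h
    simp only [mem_filter] at h₁ h₂
    have d₁ : Disjoint τ₁ σ := Finset.disjoint_iff_inter_eq_empty.2 h₁.2.1
    have d₂ : Disjoint τ₂ σ := Finset.disjoint_iff_inter_eq_empty.2 h₂.2.1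
    calc τ₁ = (τ₁ ∪ σ) \ σ := (Finset.union_sdiff_cancel_right d₁).symm
    _ = (τ₂ ∪ σ) \ σ := by rw [h]
    _ = τ₂ := Finset.union_sdiff_cancel_right d₂
  · intro π hπ
    simp only [mem_filter] at hπ
    obtain ⟨hπL, hss⟩ := hπ
    have hne' : π \ σ ≠ ∅ := by
      intro h
      exact hss.not_subset (Finset.sdiff_eq_empty_iff_subset.1 h)
    refine ⟨π \ σ, ?_, ?_⟩
    · simp only [mem_filter]
      exact ⟨hdown π hπL _ (Finset.sdiff_subset) hne',
        Finset.sdiff_inter_self _ _, by rw [Finset.sdiff_union_of_subset hss.subset]; exact hπL⟩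
    · exact Finset.sdiff_union_of_subset hss.subset

open Finset

lemma count_parity {V : Type*} [Fintype V] [DecidableEq V]
    (L : Finset (Finset V)) (hne : ∅ ∉ L)
    (hdown : ∀ σ ∈ L, ∀ τ : Finset V, τ ⊆ σ → τ ≠ ∅ → τ ∈ L)
    (hlink : ∀ σ ∈ L, Even ((L.filter (fun π => σ ⊂ π)).card))
    (A : Finset V) :
    (((L.filter (fun σ => σ ∩ A = ∅)).card : ZMod 2) + ((L.filter (fun σ => σ ⊆ A)).card : ZMod 2))
      = (L.card : ZMod 2) := by
  have evencast : ∀ n : ℕ, Even n → (n : ZMod 2) = 0 := fun n h =>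
    (ZMod.natCast_eq_zero_iff n 2).2 h.two_dvd
  -- the double sum
  have hL : ∑ σ ∈ L, ∑ π ∈ L, (if σ ⊆ A ∧ σ ⊂ π then (1 : ZMod 2) else 0) = 0 := by
    apply Finset.sum_eq_zero
    intro σ hσ
    by_cases hσA : σ ⊆ A
    · have : ∑ π ∈ L, (if σ ⊆ A ∧ σ ⊂ π then (1 : ZMod 2) else 0)
          = ((L.filter (fun π => σ ⊂ π)).card : ZMod 2) := by
        have hfe : L.filter (fun π => σ ⊆ A ∧ σ ⊂ π) = L.filter (fun π => σ ⊂ π) :=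
          Finset.filter_congr (fun π _ => by simp [hσA])
        rw [Finset.sum_boole, hfe]
      rw [this]
      exact evencast _ (hlink σ hσ)
    · apply Finset.sum_eq_zero
      intro π _
      simp [hσA]
  rw [Finset.sum_comm] at hL
  -- inner count for fixed π
  have hinner : ∀ π ∈ L, ∑ σ ∈ L, (if σ ⊆ A ∧ σ ⊂ π then (1 : ZMod 2) else 0)
      = (if π ∩ A = ∅ then 1 else 0) + 1 + (if π ⊆ A then 1 else 0) := by
    intro π hπ
    have hπne : π ≠ ∅ := fun h => hne (h ▸ hπ)
    rw [Finset.sum_boole]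
    have hset : L.filter (fun σ => σ ⊆ A ∧ σ ⊂ π)
        = (π ∩ A).powerset.filter (fun σ => σ ≠ ∅ ∧ σ ≠ π) := by
      ext σ
      simp only [mem_filter, mem_powerset, Finset.subset_inter_iff]
      constructor
      · rintro ⟨hσL, hσA, hσπ⟩
        exact ⟨⟨hσπ.subset, hσA⟩, fun h => hne (h ▸ hσL), hσπ.ne⟩
      · rintro ⟨⟨h1, h2⟩, h3, h4⟩
        exact ⟨hdown π hπ σ h1 h3, h2, Finset.ssubset_iff_subset_ne.2 ⟨h1, h4⟩⟩
    rw [hset]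
    have hsplit := Finset.card_filter_add_card_filter_not
      (s := (π ∩ A).powerset) (p := fun σ => σ ≠ ∅ ∧ σ ≠ π)
    have hnegset : (π ∩ A).powerset.filter (fun σ => ¬(σ ≠ ∅ ∧ σ ≠ π))
        = if π ⊆ A then ({∅, π} : Finset (Finset V)) else {∅} := by
      split_ifs with hπA
      · ext σ
        simp only [mem_filter, mem_powerset, mem_insert, mem_singleton, not_and_or, not_not]
        constructor
        · rintro ⟨_, h | h⟩
          · exact Or.inl h
          · exact Or.inr h
        · rintro (h | h)
          · exact ⟨by simp [h], Or.inl h⟩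
          · exact ⟨by simp [h, Finset.subset_inter_iff, hπA], Or.inr h⟩
      · ext σ
        simp only [mem_filter, mem_powerset, mem_singleton, not_and_or, not_not]
        constructor
        · rintro ⟨hsub, h | h⟩
          · exact h
          · exfalso
            exact hπA ((Finset.subset_inter_iff.1 (h ▸ hsub)).2)
        · rintro h
          exact ⟨by simp [h], Or.inl h⟩
    have hnegcard : ((π ∩ A).powerset.filter (fun σ => ¬(σ ≠ ∅ ∧ σ ≠ π))).card
        = 1 + (if π ⊆ A then 1 else 0) := by
      rw [hnegset]
      split_ifs with hπA
      · rw [Finset.card_insert_of_notMem (by simpa using hπne.symm), Finset.card_singleton]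
      · simp
    have hcards : ((π ∩ A).powerset.filter (fun σ => σ ≠ ∅ ∧ σ ≠ π)).card
        + (1 + (if π ⊆ A then 1 else 0)) = 2 ^ (π ∩ A).card := by
      rw [← hnegcard, hsplit, Finset.card_powerset]
    have : (((π ∩ A).powerset.filter (fun σ => σ ≠ ∅ ∧ σ ≠ π)).card : ZMod 2)
        + (1 + (if π ⊆ A then 1 else 0)) = (2 : ZMod 2) ^ (π ∩ A).card := by
      have := congrArg (fun n : ℕ => (n : ZMod 2)) hcards
      push_cast at this
      rw [← this]
    have h2 : (2 : ZMod 2) ^ (π ∩ A).card = if π ∩ A = ∅ then 1 else 0 := by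
      rw [show (2 : ZMod 2) = 0 by decide]
      rcases Nat.eq_zero_or_pos (π ∩ A).card with h | h
      · simp [Finset.card_eq_zero.1 h, pow_zero]
      · rw [zero_pow h.ne', if_neg]
        intro hc
        simp [hc] at h
    -- solve for the filter card
    have := this
    rw [h2] at this
    -- fcard = [π∩A=∅] - 1 - [π⊆A] = [π∩A=∅] + 1 + [π⊆A] in ZMod 2
    have key : (((π ∩ A).powerset.filter (fun σ => σ ≠ ∅ ∧ σ ≠ π)).card : ZMod 2)
        = (if π ∩ A = ∅ then 1 else 0) + 1 + (if π ⊆ A then 1 else 0) := by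
      have hchar : ∀ a : ZMod 2, a + a = 0 := by decide
      linear_combination this - hchar (1 + (if π ⊆ A then 1 else 0))
    exact key
  rw [Finset.sum_congr rfl hinner] at hL
  simp only [Finset.sum_add_distrib, Finset.sum_boole, Finset.sum_const, nsmul_eq_mul, mul_one] at hL
  have hchar : ∀ a : ZMod 2, a + a = 0 := by decide
  linear_combination hL - hchar ((L.card : ZMod 2))

lemma zmod2_prod_eq {V : Type*} [DecidableEq V] (σ : Finset V) (y : V → ZMod 2) :
    ∏ v ∈ σ, y v = if ∀ v ∈ σ, y v = 1 then 1 else 0 := by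
  split_ifs with h
  · exact Finset.prod_eq_one h
  · push_neg at h
    obtain ⟨v, hv, hv1⟩ := h
    have h0 : ∀ a : ZMod 2, a ≠ 1 → a = 0 := by decide
    exact Finset.prod_eq_zero hv (h0 _ hv1)

lemma derive_hlink {V : Type*} [Fintype V] [DecidableEq V]
    (L : Finset (Finset V)) (hne : ∅ ∉ L)
    (hdown : ∀ σ ∈ L, ∀ τ : Finset V, τ ⊆ σ → τ ≠ ∅ → τ ∈ L) (d : ℕ)
    (hpure : ∀ σ ∈ L, ∃ τ ∈ L, σ ⊆ τ ∧ τ.card = d + 1)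
    (hridge : ∀ σ ∈ L, σ.card = d →
        (L.filter (fun τ => σ ⊂ τ ∧ τ.card = d + 1)).card = 2)
    (hlow : ∀ σ ∈ L, σ.card < d →
        Even ((L.filter (fun τ => τ ∩ σ = ∅ ∧ τ ∪ σ ∈ L)).card)) :
    ∀ σ ∈ L, Even ((L.filter (fun π => σ ⊂ π)).card) := by
  have hbound : ∀ σ ∈ L, σ.card ≤ d + 1 := by
    intro σ hσ
    obtain ⟨τ, hτ, hsub, hc⟩ := hpure σ hσ
    exact hc ▸ Finset.card_le_card hsub
  intro σ hσ
  have hσb := hbound σ hσ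
  rcases show σ.card < d ∨ σ.card = d ∨ σ.card = d + 1 by omega with h | h | h
  · rw [← link_eq_strict_supersets L hne hdown σ]
    exact hlow σ hσ h
  · have hfe : L.filter (fun π => σ ⊂ π) = L.filter (fun π => σ ⊂ π ∧ π.card = d + 1) := by
      apply Finset.filter_congr
      intro π hπ
      constructor
      · intro hss
        refine ⟨hss, le_antisymm (hbound π hπ) ?_⟩
        have := Finset.card_lt_card hss
        omega
      · exact And.left
    rw [hfe, hridge σ hσ h]
    exact even_two
  · have hempty : L.filter (fun π => σ ⊂ π) = ∅ := by
      rw [Finset.filter_eq_empty_iff]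
      intro π hπ hss
      have h1 := Finset.card_lt_card hss
      have h2 := hbound π hπ
      omega
    rw [hempty]
    simp

/-- for any finite simplicial complex `L`, the number of simplices of `L`
is congruent to `χ(L) = Σ_{σ∈L} (−1)^{dim σ}` mod 2. Consequently, for a pure
`d`-dimensional complex in which every `(d−1)`-simplex lies in exactly two `d`-simplices
and every lower-dimensional simplex has a link with an even number of simplices, the
diagonal operator `U = Π_{σ∈L} C^{dim σ}Z_σ` satisfies `X̄ U X̄ U = (−1)^{χ(L)}`. -/
theorem simplex_count_mod_two_and_flip_commutation {V : Type*} [Fintype V] [DecidableEq V]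
    (L : Finset (Finset V))
    (hne : ∅ ∉ L)
    (hdown : ∀ σ ∈ L, ∀ τ : Finset V, τ ⊆ σ → τ ≠ ∅ → τ ∈ L) :
    ((L.card : ℤ) ≡ ∑ σ ∈ L, (-1 : ℤ) ^ (σ.card - 1) [ZMOD 2]) ∧
    ∀ d : ℕ,
      (∀ σ ∈ L, ∃ τ ∈ L, σ ⊆ τ ∧ τ.card = d + 1) →
      (∀ σ ∈ L, σ.card = d →
        (L.filter (fun τ => σ ⊂ τ ∧ τ.card = d + 1)).card = 2) →
      (∀ σ ∈ L, σ.card < d →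
        Even ((L.filter (fun τ => τ ∩ σ = ∅ ∧ τ ∪ σ ∈ L)).card)) →
      ∀ x : V → ZMod 2,
        ((-1 : ℚ) ^ (((∑ σ ∈ L, ∏ v ∈ σ, (x v + 1)) + ∑ σ ∈ L, ∏ v ∈ σ, x v).val))
          = (-1 : ℚ) ^ (∑ σ ∈ L, (-1 : ℤ) ^ (σ.card - 1)) := by
  have part1 : (L.card : ℤ) ≡ ∑ σ ∈ L, (-1 : ℤ) ^ (σ.card - 1) [ZMOD 2] := by
    have hc : ((L.card : ℤ) : ZMod 2) = ((∑ σ ∈ L, (-1 : ℤ) ^ (σ.card - 1) : ℤ) : ZMod 2) := by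
      push_cast
      rw [show ((-1 : ZMod 2)) = 1 by decide]
      simp
    exact (ZMod.intCast_eq_intCast_iff _ _ _).1 hc
  refine ⟨part1, ?_⟩
  intro d hpure hridge hlow x
  classical
  set A : Finset V := Finset.univ.filter (fun v => x v = 1) with hA
  have hmem : ∀ v, v ∈ A ↔ x v = 1 := by intro v; simp [hA]
  have prod1 : ∀ σ : Finset V, (∏ v ∈ σ, x v) = if σ ⊆ A then 1 else 0 := by
    intro σ
    have hiff : (∀ v ∈ σ, x v = 1) ↔ σ ⊆ A := by
      constructor
      · intro h v hv; exact (hmem v).2 (h v hv)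
      · intro h v hv; exact (hmem v).1 (h hv)
    rw [zmod2_prod_eq]
    split_ifs with h1 h2 h2 <;> first | rfl | exact absurd (hiff.1 h1) h2 | exact absurd (hiff.2 h2) h1
  have prod0 : ∀ σ : Finset V, (∏ v ∈ σ, (x v + 1)) = if σ ∩ A = ∅ then 1 else 0 := by
    intro σ
    have h01 : ∀ a : ZMod 2, (a + 1 = 1 ↔ a = 0) := by decide
    have hiff : (∀ v ∈ σ, x v + 1 = 1) ↔ σ ∩ A = ∅ := by
      rw [Finset.eq_empty_iff_forall_notMem]
      constructor
      · intro h v hv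
        rw [Finset.mem_inter] at hv
        obtain ⟨hvσ, hvA⟩ := hv
        have hx0 : x v = 0 := (h01 _).1 (h v hvσ)
        have hx1 : x v = 1 := (hmem v).1 hvA
        rw [hx0] at hx1
        exact absurd hx1 (by decide)
      · intro h v hvσ
        have hvA : v ∉ A := fun hA' => h v (Finset.mem_inter.2 ⟨hvσ, hA'⟩)
        have hx : x v ≠ 1 := fun e => hvA ((hmem v).2 e)
        have h0 : ∀ a : ZMod 2, a ≠ 1 → a = 0 := by decide
        rw [(h01 _).2 (h0 _ hx)]
    rw [zmod2_prod_eq]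
    split_ifs with h1 h2 h2 <;> first | rfl | exact absurd (hiff.1 h1) h2 | exact absurd (hiff.2 h2) h1
  have s0 : (∑ σ ∈ L, ∏ v ∈ σ, (x v + 1)) = ((L.filter (fun σ => σ ∩ A = ∅)).card : ZMod 2) := by
    rw [Finset.sum_congr rfl (fun σ _ => prod0 σ), Finset.sum_boole]
  have s1 : (∑ σ ∈ L, ∏ v ∈ σ, x v) = ((L.filter (fun σ => σ ⊆ A)).card : ZMod 2) := by
    rw [Finset.sum_congr rfl (fun σ _ => prod1 σ), Finset.sum_boole]
  have hlink := derive_hlink L hne hdown d hpure hridge hlow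
  have hS : (∑ σ ∈ L, ∏ v ∈ σ, (x v + 1)) + ∑ σ ∈ L, ∏ v ∈ σ, x v = (L.card : ZMod 2) := by
    rw [s0, s1]
    exact count_parity L hne hdown hlink A
  rw [hS, ZMod.val_natCast]
  have hmod : (L.card : ℤ) % 2 = (∑ σ ∈ L, (-1 : ℤ) ^ (σ.card - 1)) % 2 := part1
  rcases Nat.even_or_odd L.card with h | h
  · rw [Nat.even_iff.1 h, pow_zero]
    refine (Even.neg_one_zpow ?_).symm
    rw [Int.even_iff]
    rw [Nat.even_iff] at h
    omega
  · rw [Nat.odd_iff.1 h, pow_one]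
    refine (Odd.neg_one_zpow ?_).symm
    rw [Int.odd_iff]
    rw [Nat.odd_iff] at h
    omega
end
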